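/- Let Θ* ∈ ([−M,M]^p)^k satisfy ∫ f_{Θ*} dP ≤ ∫ f_Θ dP for all Θ ∈ (ℝ^p)^k, and let Θ̂_n : Ω → ([−M,M]^p)^k be measurable maps such that, almost surely, Θ̂_n minimizes Θ ↦ (1/n) Σ_{i=1}^n f_Θ(X_i) over ([−M,M]^p)^k. Then the excess risk is √n-consistent: for every δ ∈ (0,1) there exist a constant C > 0 and an integer N such that for all n ≥ N, ℙ( √n · ( ∫ f_{Θ̂_n} dP − ∫ f_{Θ*} dP ) ≤ C ) ≥ 1 − δ; that is, |∫ f_{Θ̂_n} dP − ∫ f_{Θ*} dP| = O_P(n^{−1/2}). -/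

import Mathlib

open MeasureTheory ProbabilityTheory Real Filter
open scoped ENNReal

/-- Bregman divergence generated by a differentiable function `φ`. -/
noncomputable def dphi {p : ℕ} (φ : EuclideanSpace ℝ (Fin p) → ℝ)
    (x y : EuclideanSpace ℝ (Fin p)) : ℝ :=
  φ x - φ y - inner ℝ (gradient φ y) (x - y)

/-- The cube `[-M, M]^p` in `ℝ^p`. -/
def cube (p : ℕ) (M : ℝ) : Set (EuclideanSpace ℝ (Fin p)) := {x | ∀ i, |x i| ≤ M}

/-- The clustering objective `f_Θ(x) = Ψ(d_φ(x,θ₁),…,d_φ(x,θ_k))`. -/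
noncomputable def fTheta {p k : ℕ} (φ : EuclideanSpace ℝ (Fin p) → ℝ)
    (Ψ : (Fin k → ℝ) → ℝ) (Θ : Fin k → EuclideanSpace ℝ (Fin p))
    (x : EuclideanSpace ℝ (Fin p)) : ℝ :=
  Ψ (fun j => dphi φ x (Θ j))

/-!
Write `Z_Θ = P_n f_Θ - P f_Θ`. Since `Θ̂ₙ` minimises the empirical risk, the excess risk
`P f_Θ̂ₙ - P f_Θ*` is at most `|Z_Θ̂ₙ - Z_Θ*|`, so it suffices to bound `sup_Θ |Z_Θ - Z_Θ*|` by
`C / √n` with probability `1 - δ`.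

On the cube a Bregman divergence with Lipschitz gradient is Lipschitz in its second argument, so
`Θ ↦ f_Θ(x)` is `L`-Lipschitz. By Hoeffding's inequality the increments `Z_u - Z_v` are then
sub-Gaussian at scale `L · dist(u, v) / √n`, and every path `Θ ↦ Z_Θ` is `2L`-Lipschitz.
Chain along dyadic grids of `([-M, M]^p)^k`, the `m`-th of which has at most `A^m` points: the
threshold of `b (m + 1)` standard deviations for the links between levels `m` and `m + 1` pays
for their number `A^(2(m + 1))`, the thresholds sum to `O(b L R / √n)`, and the finest level `n`,
of mesh `R / 2^n ≤ R / √n`, is handled by the Lipschitz bound.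
-/

open Finset

theorem isClosed_cube (p : ℕ) (M : ℝ) : IsClosed (cube p M) := by
  have : cube p M = ⋂ i, {x | |x i| ≤ M} := by ext; simp [cube]
  rw [this]
  exact isClosed_iInter fun i => isClosed_le (EuclideanSpace.proj i).continuous.abs continuous_const

theorem norm_le_sqrt_mul_of_forall_abs_le {p : ℕ} {a : ℝ} (ha : 0 ≤ a)
    {v : EuclideanSpace ℝ (Fin p)} (hv : ∀ i, |v i| ≤ a) : ‖v‖ ≤ √p * a := by
  rw [EuclideanSpace.norm_eq, ← Real.sqrt_sq ha, ← Real.sqrt_mul (Nat.cast_nonneg p)]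
  refine Real.sqrt_le_sqrt ?_
  calc ∑ i, ‖v i‖ ^ 2 ≤ ∑ _i : Fin p, a ^ 2 :=
        sum_le_sum fun i _ => by
          rw [Real.norm_eq_abs]; exact pow_le_pow_left₀ (abs_nonneg _) (hv i) 2
    _ = p * a ^ 2 := by simp

theorem isCompact_cube (p : ℕ) {M : ℝ} (hM : 0 ≤ M) : IsCompact (cube p M) :=
  Metric.isCompact_of_isClosed_isBounded (isClosed_cube p M) <|
    (Metric.isBounded_closedBall (x := 0) (r := √p * M)).subset fun x hx => by
      simpa using norm_le_sqrt_mul_of_forall_abs_le hM hx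

theorem norm_sub_le_of_mem_cube {p : ℕ} {M : ℝ} (hM : 0 ≤ M) {x y : EuclideanSpace ℝ (Fin p)}
    (hx : x ∈ cube p M) (hy : y ∈ cube p M) : ‖x - y‖ ≤ 2 * √p * M := by
  rw [mul_right_comm, mul_comm 2 M, mul_comm]
  refine norm_le_sqrt_mul_of_forall_abs_le (by positivity) fun i => ?_
  simpa [mul_two] using (abs_sub _ _).trans (add_le_add (hx i) (hy i))

section Bregman

variable {p : ℕ} {φ : EuclideanSpace ℝ (Fin p) → ℝ}

theorem dphi_nonneg (hφconv : ConvexOn ℝ Set.univ φ) (hφdiff : Differentiable ℝ φ)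
    (x y : EuclideanSpace ℝ (Fin p)) : 0 ≤ dphi φ x y := by
  set g : ℝ → ℝ := fun t => φ (y + t • (x - y))
  have hg : HasDerivAt g (inner ℝ (gradient φ y) (x - y)) 0 := by
    have hline : HasDerivAt (fun t : ℝ => y + t • (x - y)) (x - y) 0 := by
      simpa using ((hasDerivAt_id (0 : ℝ)).smul_const (x - y)).const_add y
    have hφ : HasFDerivAt φ (InnerProductSpace.toDual ℝ _ (gradient φ y))
        (y + (0 : ℝ) • (x - y)) := by
      simpa using (hφdiff y).hasGradientAt.hasFDerivAt
    have := hφ.comp_hasDerivAt 0 hline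
    simp only [InnerProductSpace.toDual_apply_apply] at this
    exact this
  have hgconv : ConvexOn ℝ Set.univ g := by
    refine (hφconv.comp_affineMap (AffineMap.lineMap y x)).congr fun t _ => ?_
    simp only [Function.comp_apply, AffineMap.lineMap_apply, vsub_eq_sub, vadd_eq_add, g]
    abel_nf
  have := hgconv.le_slope_of_hasDerivAt (Set.mem_univ 0) (Set.mem_univ 1) one_pos hg
  simp only [g, slope_def_field, one_smul, zero_smul, add_zero, sub_zero, div_one,
    add_sub_cancel] at this
  simp only [dphi]
  linarith

theorem dphi_add_dphi (x y : EuclideanSpace ℝ (Fin p)) :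
    dphi φ x y + dphi φ y x = inner ℝ (gradient φ x - gradient φ y) (x - y) := by
  simp only [dphi, inner_sub_left, ← neg_sub x y, inner_neg_right]
  ring

theorem dphi_sub_dphi (x t t' : EuclideanSpace ℝ (Fin p)) :
    dphi φ x t - dphi φ x t' = dphi φ t' t + inner ℝ (gradient φ t' - gradient φ t) (x - t') := by
  have : x - t = (t' - t) + (x - t') := by abel
  simp only [dphi, this, inner_add_right, inner_sub_left]
  ring

variable (hφconv : ConvexOn ℝ Set.univ φ) (hφdiff : Differentiable ℝ φ)
  {S : Set (EuclideanSpace ℝ (Fin p))} {H : ℝ}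
  (hgradlip : ∀ x ∈ S, ∀ y ∈ S, ‖gradient φ x - gradient φ y‖ ≤ H * ‖x - y‖)
include hφconv hφdiff hgradlip

theorem dphi_le_mul_norm_sq {x y : EuclideanSpace ℝ (Fin p)} (hx : x ∈ S) (hy : y ∈ S) :
    dphi φ x y ≤ H * ‖x - y‖ ^ 2 := by
  have hsymm := dphi_add_dphi (φ := φ) x y
  have hinner : inner ℝ (gradient φ x - gradient φ y) (x - y) ≤ H * ‖x - y‖ ^ 2 :=
    calc _ ≤ ‖gradient φ x - gradient φ y‖ * ‖x - y‖ := real_inner_le_norm _ _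
      _ ≤ H * ‖x - y‖ * ‖x - y‖ := by gcongr; exact hgradlip x hx y hy
      _ = H * ‖x - y‖ ^ 2 := by ring
  linarith [dphi_nonneg hφconv hφdiff y x]

theorem abs_dphi_sub_dphi_le {D : ℝ} (hH : 0 ≤ H) (hS : ∀ x ∈ S, ∀ y ∈ S, ‖x - y‖ ≤ D)
    {x t t' : EuclideanSpace ℝ (Fin p)} (hx : x ∈ S) (ht : t ∈ S) (ht' : t' ∈ S) :
    |dphi φ x t - dphi φ x t'| ≤ 2 * H * D * ‖t - t'‖ := by
  have hbreg : dphi φ t' t ≤ H * D * ‖t - t'‖ :=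
    calc _ ≤ H * ‖t' - t‖ ^ 2 := dphi_le_mul_norm_sq hφconv hφdiff hgradlip ht' ht
      _ = H * ‖t' - t‖ * ‖t - t'‖ := by rw [norm_sub_rev t' t]; ring
      _ ≤ H * D * ‖t - t'‖ := by gcongr; exact hS t' ht' t ht
  have hinner : |inner ℝ (gradient φ t' - gradient φ t) (x - t')| ≤ H * D * ‖t - t'‖ :=
    calc _ ≤ ‖gradient φ t' - gradient φ t‖ * ‖x - t'‖ := abs_real_inner_le_norm _ _
      _ ≤ H * ‖t' - t‖ * D := by
          gcongr
          exacts [hgradlip t' ht' t ht, hS x hx t' ht']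
      _ = H * D * ‖t - t'‖ := by rw [norm_sub_rev]; ring
  rw [dphi_sub_dphi, abs_le]
  constructor <;> linarith [dphi_nonneg hφconv hφdiff t' t, abs_le.1 hinner]

end Bregman

section Objective

variable {p k : ℕ} {φ : EuclideanSpace ℝ (Fin p) → ℝ} {Ψ : (Fin k → ℝ) → ℝ} {τ : ℝ}
  (hφconv : ConvexOn ℝ Set.univ φ) (hφdiff : Differentiable ℝ φ)
  (hτ : 0 ≤ τ) (hΨlip : ∀ u v : Fin k → ℝ, (∀ j, 0 ≤ u j) → (∀ j, 0 ≤ v j) →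
      |Ψ u - Ψ v| ≤ τ * ∑ j, |u j - v j|)
include hφconv hφdiff hτ hΨlip

theorem continuous_fTheta (Θ : Fin k → EuclideanSpace ℝ (Fin p)) :
    Continuous (fTheta φ Ψ Θ) := by
  have hΨ : LipschitzOnWith (τ * k).toNNReal Ψ {u | ∀ j, 0 ≤ u j} := by
    refine LipschitzOnWith.of_dist_le_mul fun u hu v hv => ?_
    calc dist (Ψ u) (Ψ v) ≤ τ * ∑ j, |u j - v j| := hΨlip u v hu hv
      _ ≤ τ * ∑ _j : Fin k, dist u v := by
          gcongr with j
          exact dist_le_pi_dist u v j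
      _ = (τ * k).toNNReal * dist u v := by
          rw [Real.coe_toNNReal _ (by positivity), sum_const, card_univ, Fintype.card_fin,
            nsmul_eq_mul, mul_assoc]
  have hd : Continuous fun x => fun j => dphi φ x (Θ j) := by
    have := hφdiff.continuous
    unfold dphi; fun_prop
  exact hΨ.continuousOn.comp_continuous hd fun x j => dphi_nonneg hφconv hφdiff x (Θ j)

theorem integrable_fTheta {P : Measure (EuclideanSpace ℝ (Fin p))} [IsFiniteMeasure P] {M : ℝ}
    (hM : 0 ≤ M) (hP : ∀ᵐ x ∂P, x ∈ cube p M) (Θ : Fin k → EuclideanSpace ℝ (Fin p)) :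
    Integrable (fTheta φ Ψ Θ) P := by
  have := (continuous_fTheta hφconv hφdiff hτ hΨlip Θ).continuousOn.integrableOn_compact
    (μ := P) (isCompact_cube p hM)
  rwa [IntegrableOn, Measure.restrict_eq_self_of_ae_mem hP] at this

theorem abs_fTheta_sub_le {S : Set (EuclideanSpace ℝ (Fin p))} {H D : ℝ} (hH : 0 ≤ H)
    (hgradlip : ∀ x ∈ S, ∀ y ∈ S, ‖gradient φ x - gradient φ y‖ ≤ H * ‖x - y‖)
    (hS : ∀ x ∈ S, ∀ y ∈ S, ‖x - y‖ ≤ D) {Θ Θ' : Fin k → EuclideanSpace ℝ (Fin p)}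
    (hΘ : ∀ j, Θ j ∈ S) (hΘ' : ∀ j, Θ' j ∈ S) {x : EuclideanSpace ℝ (Fin p)} (hx : x ∈ S) :
    |fTheta φ Ψ Θ x - fTheta φ Ψ Θ' x| ≤ τ * k * (2 * H * D) * ‖Θ - Θ'‖ :=
  calc |fTheta φ Ψ Θ x - fTheta φ Ψ Θ' x|
      ≤ τ * ∑ j, |dphi φ x (Θ j) - dphi φ x (Θ' j)| :=
        hΨlip _ _ (fun j => dphi_nonneg hφconv hφdiff _ _) fun j => dphi_nonneg hφconv hφdiff _ _
    _ ≤ τ * ∑ _j : Fin k, 2 * H * D * ‖Θ - Θ'‖ := by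
        gcongr with j
        refine (abs_dphi_sub_dphi_le hφconv hφdiff hgradlip hH hS hx (hΘ j) (hΘ' j)).trans ?_
        have hD : 0 ≤ D := (norm_nonneg _).trans (hS x hx x hx)
        gcongr
        exact norm_le_pi_norm (Θ - Θ') j
    _ = τ * k * (2 * H * D) * ‖Θ - Θ'‖ := by
        rw [sum_const, card_univ, Fintype.card_fin, nsmul_eq_mul]; ring

theorem exists_pos_abs_fTheta_sub_le {M H : ℝ} (hM : 0 ≤ M) (hH : 0 ≤ H)
    (hgradlip : ∀ x ∈ cube p M, ∀ y ∈ cube p M, ‖gradient φ x - gradient φ y‖ ≤ H * ‖x - y‖) :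
    ∃ L > 0, ∀ Θ ∈ Set.univ.pi fun _ : Fin k => cube p M, ∀ Θ' ∈ Set.univ.pi fun _ => cube p M,
      ∀ x ∈ cube p M, |fTheta φ Ψ Θ x - fTheta φ Ψ Θ' x| ≤ L * dist Θ Θ' := by
  refine ⟨τ * k * (2 * H * (2 * √p * M)) + 1, by positivity, fun Θ hΘ Θ' hΘ' x hx => ?_⟩
  rw [dist_eq_norm]
  refine (abs_fTheta_sub_le hφconv hφdiff hτ hΨlip hH hgradlip
    (fun x hx y hy => norm_sub_le_of_mem_cube hM hx hy) (fun j => hΘ j trivial)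
    (fun j => hΘ' j trivial) hx).trans ?_
  gcongr
  linarith

end Objective

section Grid

variable {M : ℝ} {m : ℕ}

noncomputable def dyadicGrid (M : ℝ) (m : ℕ) : Finset ℝ :=
  (Icc (-2 ^ m : ℤ) (2 ^ m)).image fun i : ℤ => M * i / 2 ^ m

theorem card_dyadicGrid_le : #(dyadicGrid M m) ≤ 2 ^ (m + 2) := by
  refine card_image_le.trans ?_
  rw [Int.card_Icc, Int.toNat_le]
  push_cast
  rw [pow_add]
  linarith [one_le_pow₀ (M₀ := ℤ) (n := m) (by norm_num : (1 : ℤ) ≤ 2)]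

theorem abs_le_of_mem_dyadicGrid (hM : 0 ≤ M) {y : ℝ} (hy : y ∈ dyadicGrid M m) : |y| ≤ M := by
  obtain ⟨i, hi, rfl⟩ := mem_image.1 hy
  have hi' : |(i : ℝ)| ≤ 2 ^ m := by
    rw [mem_Icc] at hi
    exact abs_le.2 ⟨by exact_mod_cast hi.1, by exact_mod_cast hi.2⟩
  rw [abs_div, abs_mul, abs_pow, abs_two, abs_of_nonneg hM, div_le_iff₀ (by positivity)]
  gcongr

theorem exists_mem_dyadicGrid_abs_sub_le (hM : 0 < M) (m : ℕ) {c : ℝ} (hc : |c| ≤ M) :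
    ∃ y ∈ dyadicGrid M m, |c - y| ≤ M / 2 ^ m := by
  set i := ⌊c * 2 ^ m / M⌋
  have hlo : c * 2 ^ m / M - 1 < i := by linarith [Int.lt_floor_add_one (c * 2 ^ m / M)]
  have hhi : (i : ℝ) ≤ c * 2 ^ m / M := Int.floor_le _
  have hbound : |c * 2 ^ m / M| ≤ 2 ^ m := by
    rw [abs_div, abs_mul, abs_pow, abs_two, abs_of_pos hM, div_le_iff₀ hM, mul_comm]
    gcongr
  refine ⟨M * i / 2 ^ m, mem_image.2 ⟨i, mem_Icc.2 ⟨?_, ?_⟩, rfl⟩, ?_⟩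
  · exact Int.le_floor.2 (by push_cast; linarith [abs_le.1 hbound])
  · exact_mod_cast hhi.trans (abs_le.1 hbound).2
  · have : c - M * i / 2 ^ m = M / 2 ^ m * (c * 2 ^ m / M - i) := by field_simp
    rw [this, abs_mul, abs_of_pos (by positivity), abs_of_nonneg (by linarith)]
    exact mul_le_of_le_one_right (by positivity) (by linarith)

variable {p k : ℕ}

noncomputable def cubeGrid (p : ℕ) (M : ℝ) (m : ℕ) : Finset (EuclideanSpace ℝ (Fin p)) :=
  (Fintype.piFinset fun _ : Fin p => dyadicGrid M m).map ⟨WithLp.toLp 2, WithLp.toLp_injective 2⟩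

theorem card_cubeGrid_le : #(cubeGrid p M m) ≤ (2 ^ (m + 2)) ^ p := by
  rw [cubeGrid, card_map, Fintype.card_piFinset]
  exact (prod_le_prod' fun _ _ => card_dyadicGrid_le).trans_eq (by simp)

theorem mem_cube_of_mem_cubeGrid (hM : 0 ≤ M) {u : EuclideanSpace ℝ (Fin p)}
    (hu : u ∈ cubeGrid p M m) : u ∈ cube p M := by
  obtain ⟨v, hv, rfl⟩ := mem_map.1 hu
  exact fun i => abs_le_of_mem_dyadicGrid hM (Fintype.mem_piFinset.1 hv i)

theorem exists_mem_cubeGrid_norm_sub_le (hM : 0 < M) (m : ℕ) {x : EuclideanSpace ℝ (Fin p)}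
    (hx : x ∈ cube p M) : ∃ u ∈ cubeGrid p M m, ‖x - u‖ ≤ √p * (M / 2 ^ m) := by
  choose v hv hxv using fun i => exists_mem_dyadicGrid_abs_sub_le hM m (hx i)
  exact ⟨WithLp.toLp 2 v, mem_map_of_mem _ (Fintype.mem_piFinset.2 hv),
    norm_le_sqrt_mul_of_forall_abs_le (by positivity) hxv⟩

theorem exists_nets_univ_pi_cube (hM : 0 < M) {Θ₀ : Fin k → EuclideanSpace ℝ (Fin p)}
    (hΘ₀ : ∀ j, Θ₀ j ∈ cube p M) :
    ∃ N : ℕ → Finset (Fin k → EuclideanSpace ℝ (Fin p)), N 0 = {Θ₀} ∧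
      (∀ m, ∀ U ∈ N m, U ∈ Set.univ.pi fun _ => cube p M) ∧ (∀ m, #(N m) ≤ (8 ^ (p * k)) ^ m) ∧
      ∀ m, ∀ Θ ∈ Set.univ.pi fun _ => cube p M, ∃ U ∈ N m, dist Θ U ≤ 2 * √p * M / 2 ^ m := by
  refine ⟨fun | 0 => {Θ₀} | m + 1 => Fintype.piFinset fun _ => cubeGrid p M (m + 1), rfl,
    ?_, ?_, ?_⟩
  · rintro (_ | m) U hU j -
    · rw [mem_singleton.1 hU]; exact hΘ₀ j
    · exact mem_cube_of_mem_cubeGrid hM.le (Fintype.mem_piFinset.1 hU j)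
  · rintro (_ | m)
    · simp
    simp only [Fintype.card_piFinset]
    calc ∏ _j : Fin k, #(cubeGrid p M (m + 1)) ≤ ∏ _j : Fin k, (2 ^ (m + 3)) ^ p :=
          prod_le_prod' fun _ _ => card_cubeGrid_le
      _ = 2 ^ ((m + 3) * p * k) := by simp [← pow_mul]
      _ ≤ 2 ^ (3 * (p * k) * (m + 1)) := by
          refine Nat.pow_le_pow_right two_pos ?_
          calc (m + 3) * p * k = (m + 3) * (p * k) := by ring
            _ ≤ 3 * (m + 1) * (p * k) := Nat.mul_le_mul_right _ (by omega)
            _ = 3 * (p * k) * (m + 1) := by ring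
      _ = (8 ^ (p * k)) ^ (m + 1) := by rw [pow_mul, pow_mul]; norm_num
  · rintro (_ | m) Θ hΘ
    · refine ⟨Θ₀, mem_singleton_self _, ?_⟩
      rw [dist_eq_norm, pow_zero, div_one]
      exact (pi_norm_le_iff_of_nonneg (by positivity)).2 fun j =>
        norm_sub_le_of_mem_cube hM.le (hΘ j trivial) (hΘ₀ j)
    choose U hU hΘU using fun j => exists_mem_cubeGrid_norm_sub_le hM (m + 1) (hΘ j trivial)
    refine ⟨U, Fintype.mem_piFinset.2 hU, ?_⟩
    rw [dist_eq_norm]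
    refine (pi_norm_le_iff_of_nonneg (by positivity)).2 fun j => (hΘU j).trans ?_
    rw [mul_div_assoc]
    have : 0 ≤ √p * (M / 2 ^ (m + 1)) := by positivity
    linarith

end Grid

theorem ofReal_one_sub_le_measure {α : Type*} [MeasurableSpace α] {μ : Measure α}
    [IsProbabilityMeasure μ] {s : Set α} {δ : ℝ} (hδ : 0 ≤ δ) (h : μ sᶜ ≤ ENNReal.ofReal δ) :
    ENNReal.ofReal (1 - δ) ≤ μ s := by
  rw [ENNReal.ofReal_sub 1 hδ, ENNReal.ofReal_one, tsub_le_iff_right]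
  calc (1 : ℝ≥0∞) = μ (s ∪ sᶜ) := by rw [Set.union_compl_self, measure_univ]
    _ ≤ μ s + μ sᶜ := measure_union_le _ _
    _ ≤ μ s + ENNReal.ofReal δ := by gcongr

section EmpiricalProcess

variable {Ω E : Type*} [MeasurableSpace E] {P : Measure E} {X : ℕ → Ω → E} {n : ℕ}

noncomputable def empiricalDeviation (P : Measure E) (X : ℕ → Ω → E) (n : ℕ) (g : E → ℝ)
    (ω : Ω) : ℝ :=
  (n : ℝ)⁻¹ * ∑ i ∈ range n, g (X i ω) - ∫ x, g x ∂P

theorem empiricalDeviation_neg (g : E → ℝ) (ω : Ω) :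
    empiricalDeviation P X n (fun x => -g x) ω = -empiricalDeviation P X n g ω := by
  simp only [empiricalDeviation, sum_neg_distrib, integral_neg]
  ring

theorem empiricalDeviation_sub {f g : E → ℝ} (hf : Integrable f P) (hg : Integrable g P)
    (ω : Ω) : empiricalDeviation P X n (fun x => f x - g x) ω =
      empiricalDeviation P X n f ω - empiricalDeviation P X n g ω := by
  simp only [empiricalDeviation, sum_sub_distrib, integral_sub hf hg]
  ring

theorem integral_sub_integral_le_abs_empiricalDeviation_sub {f g : E → ℝ} {ω : Ω}
    (h : (n : ℝ)⁻¹ * ∑ i ∈ range n, f (X i ω) ≤ (n : ℝ)⁻¹ * ∑ i ∈ range n, g (X i ω)) :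
    ∫ x, f x ∂P - ∫ x, g x ∂P ≤
      |empiricalDeviation P X n f ω - empiricalDeviation P X n g ω| := by
  have := neg_abs_le (empiricalDeviation P X n f ω - empiricalDeviation P X n g ω)
  simp only [empiricalDeviation] at this ⊢
  linarith

theorem abs_empiricalDeviation_le [IsProbabilityMeasure P] {S : Set E} (hPS : ∀ᵐ x ∂P, x ∈ S)
    {g : E → ℝ} {c : ℝ} (hgc : ∀ x ∈ S, |g x| ≤ c) {ω : Ω} (hX : ∀ i < n, X i ω ∈ S) :
    |empiricalDeviation P X n g ω| ≤ 2 * c := by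
  have hc : 0 ≤ c := by
    obtain ⟨x, hx⟩ := hPS.exists
    exact (abs_nonneg _).trans (hgc x hx)
  have hmean : |(n : ℝ)⁻¹ * ∑ i ∈ range n, g (X i ω)| ≤ c := by
    rcases n.eq_zero_or_pos with rfl | hn
    · simpa using hc
    rw [abs_mul, abs_inv, Nat.abs_cast, inv_mul_le_iff₀ (by exact_mod_cast hn)]
    calc |∑ i ∈ range n, g (X i ω)| ≤ ∑ i ∈ range n, |g (X i ω)| := abs_sum_le_sum_abs _ _
      _ ≤ ∑ _i ∈ range n, c := sum_le_sum fun i hi => hgc _ (hX i (mem_range.1 hi))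
      _ = n * c := by simp
  have hint : |∫ x, g x ∂P| ≤ c := by
    simpa using norm_integral_le_of_norm_le_const
      (hPS.mono fun x hx => (Real.norm_eq_abs _).trans_le (hgc x hx))
  rw [empiricalDeviation, two_mul]
  exact (abs_sub _ _).trans (add_le_add hmean hint)

variable [MeasurableSpace Ω] {μ : Measure Ω} (hXmeas : ∀ i, Measurable (X i))
  (hXlaw : ∀ i, μ.map (X i) = P)
include hXmeas hXlaw

theorem ae_comp_of_ae {q : E → Prop} (hq : ∀ᵐ x ∂P, q x) (i : ℕ) : ∀ᵐ ω ∂μ, q (X i ω) :=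
  ae_of_ae_map (hXmeas i).aemeasurable (by rwa [hXlaw i])

theorem ae_abs_empiricalDeviation_sub_le [IsProbabilityMeasure P] {α : Type*} [PseudoMetricSpace α]
    {T : Set α} {F : α → E → ℝ} {S : Set E} {L : ℝ} (hPS : ∀ᵐ x ∂P, x ∈ S)
    (hFint : ∀ u ∈ T, Integrable (F u) P)
    (hF : ∀ u ∈ T, ∀ v ∈ T, ∀ x ∈ S, |F u x - F v x| ≤ L * dist u v) :
    ∀ᵐ ω ∂μ, ∀ u ∈ T, ∀ v ∈ T,
      |empiricalDeviation P X n (F u) ω - empiricalDeviation P X n (F v) ω| ≤ 2 * L * dist u v := by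
  filter_upwards [ae_all_iff.2 (ae_comp_of_ae hXmeas hXlaw hPS)] with ω hω u hu v hv
  rw [← empiricalDeviation_sub (hFint u hu) (hFint v hv), mul_assoc]
  exact abs_empiricalDeviation_le hPS (hF u hu v hv) fun i _ => hω i

variable [IsProbabilityMeasure μ] (hXindep : iIndepFun X μ)
include hXindep

theorem measure_le_empiricalDeviation_le {g : E → ℝ} (hg : Measurable g) {c : ℝ}
    (hgc : ∀ᵐ x ∂P, |g x| ≤ c) {t : ℝ} (ht : 0 ≤ t) :
    μ {ω | t ≤ empiricalDeviation P X n g ω} ≤ ENNReal.ofReal (exp (-n * t ^ 2 / (2 * c ^ 2))) := by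
  rcases n.eq_zero_or_pos with rfl | hn
  · simpa using prob_le_one
  have hn' : (0 : ℝ) < n := by exact_mod_cast hn
  set Y : ℕ → Ω → ℝ := fun i ω => g (X i ω) - ∫ x, g x ∂P
  have hY : ∀ i, HasSubgaussianMGF (Y i) ((‖c - -c‖₊ / 2) ^ 2) μ := fun i => by
    have hmean : ∫ ω, g (X i ω) ∂μ = ∫ x, g x ∂P := by
      rw [← hXlaw i, integral_map (hXmeas i).aemeasurable hg.aestronglyMeasurable]
    have := hasSubgaussianMGF_of_mem_Icc (hg.comp (hXmeas i)).aemeasurable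
      ((ae_comp_of_ae hXmeas hXlaw hgc i).mono fun ω h => abs_le.1 h)
    simpa only [Function.comp, hmean] using this
  have hYindep : iIndepFun Y μ :=
    hXindep.comp (fun _ x => g x - ∫ x, g x ∂P) fun _ => hg.sub measurable_const
  have hevent : {ω | t ≤ empiricalDeviation P X n g ω} = {ω | n * t ≤ ∑ i ∈ range n, Y i ω} := by
    ext ω
    simp only [Set.mem_ofPred_eq, empiricalDeviation, Y, sum_sub_distrib, sum_const, card_range,
      nsmul_eq_mul]
    rw [← le_div_iff₀' hn']
    field_simp
  have hparam : ((‖c - -c‖₊ / 2) ^ 2 : NNReal) = (c ^ 2 : ℝ) := by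
    simp only [sub_neg_eq_add, div_pow, NNReal.coe_div, NNReal.coe_pow, coe_nnnorm, norm_eq_abs,
      sq_abs, NNReal.coe_ofNat]
    ring
  rw [hevent, ← ofReal_measureReal]
  refine ENNReal.ofReal_le_ofReal ((HasSubgaussianMGF.measure_sum_range_ge_le_of_iIndepFun hYindep
    (fun i _ => hY i) (by positivity)).trans_eq ?_)
  rw [hparam]
  congr 1
  field_simp

theorem measure_le_abs_empiricalDeviation_le {g : E → ℝ} (hg : Measurable g) {c : ℝ}
    (hgc : ∀ᵐ x ∂P, |g x| ≤ c) {t : ℝ} (ht : 0 ≤ t) :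
    μ {ω | t ≤ |empiricalDeviation P X n g ω|} ≤
      ENNReal.ofReal (2 * exp (-n * t ^ 2 / (2 * c ^ 2))) := by
  have hsplit : {ω | t ≤ |empiricalDeviation P X n g ω|} = {ω | t ≤ empiricalDeviation P X n g ω}
      ∪ {ω | t ≤ empiricalDeviation P X n (fun x => -g x) ω} := by
    ext ω
    simp only [Set.mem_ofPred_eq, Set.mem_union, empiricalDeviation_neg, le_abs]
  rw [hsplit, two_mul, ENNReal.ofReal_add (by positivity) (by positivity)]
  refine (measure_union_le _ _).trans (add_le_add ?_ ?_)
  · exact measure_le_empiricalDeviation_le hXmeas hXlaw hXindep hg hgc ht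
  · exact measure_le_empiricalDeviation_le hXmeas hXlaw hXindep (g := fun x => -g x) hg.neg
      (hgc.mono fun x hx => by rwa [abs_neg]) ht

theorem measure_lt_abs_empiricalDeviation_sub_le {α : Type*} [MetricSpace α] {T : Set α}
    {F : α → E → ℝ} {S : Set E} {L : ℝ} (hL : 0 < L) (hn : 0 < n) (hPS : ∀ᵐ x ∂P, x ∈ S)
    (hFmeas : ∀ u, Measurable (F u)) (hFint : ∀ u ∈ T, Integrable (F u) P)
    (hF : ∀ u ∈ T, ∀ v ∈ T, ∀ x ∈ S, |F u x - F v x| ≤ L * dist u v)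
    {u v : α} (hu : u ∈ T) (hv : v ∈ T) {s : ℝ} (hs : 0 ≤ s) :
    μ {ω | s * (L / √n) * dist u v <
        |empiricalDeviation P X n (F u) ω - empiricalDeviation P X n (F v) ω|} ≤
      ENNReal.ofReal (2 * exp (-s ^ 2 / 2)) := by
  rcases eq_or_ne u v with rfl | huv
  · simp
  have hd : 0 < dist u v := dist_pos.2 huv
  have hn' : (0 : ℝ) < n := by exact_mod_cast hn
  calc _ ≤ μ {ω | s * (L / √n) * dist u v ≤
        |empiricalDeviation P X n (fun x => F u x - F v x) ω|} := by
        refine measure_mono fun ω hω => ?_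
        simp only [Set.mem_ofPred_eq, empiricalDeviation_sub (hFint u hu) (hFint v hv)] at hω ⊢
        exact hω.le
    _ ≤ ENNReal.ofReal (2 * exp (-n * (s * (L / √n) * dist u v) ^ 2 / (2 * (L * dist u v) ^ 2))) :=
        measure_le_abs_empiricalDeviation_le hXmeas hXlaw hXindep
          ((hFmeas u).sub (hFmeas v)) (hPS.mono (hF u hu v hv)) (by positivity)
    _ = ENNReal.ofReal (2 * exp (-s ^ 2 / 2)) := by
        congr 3
        field_simp
        rw [Real.sq_sqrt hn'.le]
        ring

end EmpiricalProcess

section Chaining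

theorem sum_range_succ_div_two_pow_le (J : ℕ) : ∑ m ∈ range J, ((m : ℝ) + 1) / 2 ^ m ≤ 4 := by
  have h : ∀ J : ℕ, ∑ m ∈ range J, ((m : ℝ) + 1) / 2 ^ m = 4 - (2 * J + 4) / 2 ^ J := by
    intro J
    induction J with
    | zero => norm_num
    | succ J ih => rw [sum_range_succ, ih]; push_cast; field_simp; ring
  rw [h]
  linarith [show (0 : ℝ) ≤ (2 * J + 4) / 2 ^ J by positivity]

theorem sum_range_two_mul_pow_succ_le {q : ℝ} (hq0 : 0 ≤ q) (hq : q ≤ 1 / 2) (J : ℕ) :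
    ∑ m ∈ range J, 2 * q ^ (m + 1) ≤ 4 * q :=
  calc ∑ m ∈ range J, 2 * q ^ (m + 1) = 2 * q * ∑ m ∈ range J, q ^ m := by
        rw [mul_sum]; congr 1 with m; ring
    _ ≤ 2 * q * ∑ m ∈ range J, (1 / 2) ^ m := by gcongr
    _ ≤ 2 * q * 2 := by gcongr; exact sum_geometric_two_le J
    _ = 4 * q := by ring

theorem exists_nonneg_mul_exp_neg_sq_half_le {c ε : ℝ} (hc : 0 < c) (hε : 0 < ε) :
    ∃ b : ℝ, 0 ≤ b ∧ c * exp (-b ^ 2 / 2) ≤ ε := by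
  refine ⟨√(2 * |log (ε / c)|), Real.sqrt_nonneg _, ?_⟩
  rw [Real.sq_sqrt (by positivity), neg_div, mul_div_cancel_left₀ _ two_ne_zero,
    ← le_div_iff₀' hc]
  calc exp (-|log (ε / c)|) ≤ exp (log (ε / c)) := exp_le_exp.2 (neg_abs_le _)
    _ = ε / c := exp_log (by positivity)

theorem sqrt_le_two_pow (n : ℕ) : √(n : ℝ) ≤ 2 ^ n := by
  rw [Real.sqrt_le_left (by positivity)]
  calc (n : ℝ) ≤ 2 ^ n := by exact_mod_cast Nat.lt_two_pow_self.le
    _ ≤ (2 ^ n) ^ 2 := le_self_pow₀ (one_le_pow₀ (by norm_num)) two_ne_zero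

variable {α : Type*} [PseudoMetricSpace α] {T : Set α} {N : ℕ → Finset α} {θ₀ : α} {R : ℝ}

theorem abs_sub_le_of_chain {Z : α → ℝ} {σ K b : ℝ} (hσ : 0 ≤ σ) (hK : 0 ≤ K) (hb : 0 ≤ b)
    (hZlip : ∀ u ∈ T, ∀ v ∈ T, |Z u - Z v| ≤ K * dist u v) {J : ℕ}
    (hlinks : ∀ m < J, ∀ u ∈ N (m + 1), ∀ v ∈ N m, |Z u - Z v| ≤ b * (m + 1) * σ * dist u v)
    (hN0 : N 0 = {θ₀}) (hNT : ∀ m, ∀ u ∈ N m, u ∈ T)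
    (hNcover : ∀ m, ∀ θ ∈ T, ∃ u ∈ N m, dist θ u ≤ R / 2 ^ m) {θ : α} (hθ : θ ∈ T) :
    |Z θ - Z θ₀| ≤ 8 * b * σ * R + K * R / 2 ^ J := by
  choose! ρ hρN hρdist using hNcover
  have hR : 0 ≤ R := by simpa using dist_nonneg.trans (hρdist 0 θ hθ)
  have hρ0 : ρ 0 θ = θ₀ := by simpa [hN0] using hρN 0 θ hθ
  have hlink : ∀ m ∈ range J,
      |Z (ρ m θ) - Z (ρ (m + 1) θ)| ≤ 2 * b * σ * R * ((m + 1) / 2 ^ m) := by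
    intro m hm
    have hdist : dist (ρ (m + 1) θ) (ρ m θ) ≤ 2 * R / 2 ^ m :=
      calc _ ≤ dist θ (ρ (m + 1) θ) + dist θ (ρ m θ) := dist_triangle_left _ _ _
        _ ≤ R / 2 ^ (m + 1) + R / 2 ^ m := add_le_add (hρdist _ θ hθ) (hρdist _ θ hθ)
        _ ≤ 2 * R / 2 ^ m := by rw [pow_succ]; field_simp; linarith
    rw [abs_sub_comm]
    calc _ ≤ b * (m + 1) * σ * dist (ρ (m + 1) θ) (ρ m θ) :=
          hlinks m (mem_range.1 hm) _ (hρN _ θ hθ) _ (hρN _ θ hθ)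
      _ ≤ b * (m + 1) * σ * (2 * R / 2 ^ m) := by gcongr
      _ = _ := by ring
  have hchain : |Z (ρ J θ) - Z θ₀| ≤ 8 * b * σ * R := by
    rw [← hρ0, abs_sub_comm]
    calc _ ≤ ∑ m ∈ range J, |Z (ρ m θ) - Z (ρ (m + 1) θ)| := by
          simpa only [Real.dist_eq] using dist_le_range_sum_dist (fun m => Z (ρ m θ)) J
      _ ≤ ∑ m ∈ range J, 2 * b * σ * R * ((m + 1) / 2 ^ m) := sum_le_sum hlink
      _ ≤ 2 * b * σ * R * 4 := by
          rw [← mul_sum]; gcongr; exact sum_range_succ_div_two_pow_le J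
      _ = 8 * b * σ * R := by ring
  have hlast : |Z θ - Z (ρ J θ)| ≤ K * R / 2 ^ J := by
    rw [mul_div_assoc]
    exact (hZlip θ hθ _ (hNT J _ (hρN J θ hθ))).trans (by gcongr; exact hρdist J θ hθ)
  calc |Z θ - Z θ₀| ≤ |Z θ - Z (ρ J θ)| + |Z (ρ J θ) - Z θ₀| := abs_sub_le _ _ _
    _ ≤ _ := by linarith

theorem measure_exists_abs_sub_gt_le_of_chain {Ω : Type*} [MeasurableSpace Ω] {μ : Measure Ω}
    {Z : α → Ω → ℝ} {σ K b : ℝ} {A : ℕ} (hσ : 0 ≤ σ) (hK : 0 ≤ K) (hb : 0 ≤ b)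
    (hinc : ∀ u ∈ T, ∀ v ∈ T, ∀ s, 0 ≤ s →
      μ {ω | s * σ * dist u v < |Z u ω - Z v ω|} ≤ ENNReal.ofReal (2 * exp (-s ^ 2 / 2)))
    (hlip : ∀ᵐ ω ∂μ, ∀ u ∈ T, ∀ v ∈ T, |Z u ω - Z v ω| ≤ K * dist u v)
    (hN0 : N 0 = {θ₀}) (hNT : ∀ m, ∀ u ∈ N m, u ∈ T) (hNcard : ∀ m, #(N m) ≤ A ^ m)
    (hNcover : ∀ m, ∀ θ ∈ T, ∃ u ∈ N m, dist θ u ≤ R / 2 ^ m)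
    (hq : A ^ 2 * exp (-b ^ 2 / 2) ≤ 1 / 2) (J : ℕ) :
    μ {ω | ∃ θ ∈ T, 8 * b * σ * R + K * R / 2 ^ J < |Z θ ω - Z θ₀ ω|} ≤
      ENNReal.ofReal (4 * (A ^ 2 * exp (-b ^ 2 / 2))) := by
  set q := (A : ℝ) ^ 2 * exp (-b ^ 2 / 2)
  set link : ℕ → Set Ω := fun m => ⋃ uv ∈ N (m + 1) ×ˢ N m,
    {ω | b * (m + 1) * σ * dist uv.1 uv.2 < |Z uv.1 ω - Z uv.2 ω|}
  have hcard : ∀ m, (#(N (m + 1) ×ˢ N m) : ℝ) ≤ ((A : ℝ) ^ 2) ^ (m + 1) := by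
    intro m
    have : #(N (m + 1) ×ˢ N m) ≤ (A ^ 2) ^ (m + 1) := by
      rw [card_product]
      refine (Nat.mul_le_mul (hNcard _) (hNcard _)).trans ?_
      rcases A.eq_zero_or_pos with rfl | hA
      · simp
      calc A ^ (m + 1) * A ^ m ≤ A ^ (m + 1) * A ^ (m + 1) :=
            Nat.mul_le_mul_left _ (Nat.pow_le_pow_right hA m.le_succ)
        _ = (A ^ 2) ^ (m + 1) := by ring
    exact_mod_cast this
  have hlink : ∀ m, μ (link m) ≤ ENNReal.ofReal (2 * q ^ (m + 1)) := by
    intro m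
    have htail : exp (-(b * (m + 1)) ^ 2 / 2) ≤ exp (-b ^ 2 / 2) ^ (m + 1) := by
      rw [← Real.exp_nat_mul, exp_le_exp]
      push_cast
      nlinarith [sq_nonneg b, sq_nonneg ((m : ℝ) * b)]
    calc μ (link m)
        ≤ ∑ uv ∈ N (m + 1) ×ˢ N m, ENNReal.ofReal (2 * exp (-(b * (m + 1)) ^ 2 / 2)) := by
          refine (measure_biUnion_finset_le _ _).trans (sum_le_sum fun uv huv => ?_)
          rw [mem_product] at huv
          exact hinc _ (hNT _ _ huv.1) _ (hNT _ _ huv.2) _ (by positivity)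
      _ = ENNReal.ofReal (#(N (m + 1) ×ˢ N m) * (2 * exp (-(b * (m + 1)) ^ 2 / 2))) := by
          rw [sum_const, nsmul_eq_mul, ENNReal.ofReal_mul (Nat.cast_nonneg _),
            ENNReal.ofReal_natCast]
      _ ≤ ENNReal.ofReal (2 * q ^ (m + 1)) := by
          refine ENNReal.ofReal_le_ofReal ?_
          calc _ ≤ ((A : ℝ) ^ 2) ^ (m + 1) * (2 * exp (-b ^ 2 / 2) ^ (m + 1)) := by
                gcongr
                exact hcard m
            _ = 2 * q ^ (m + 1) := by rw [mul_pow]; ring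
  have hcover : {ω | ∃ θ ∈ T, 8 * b * σ * R + K * R / 2 ^ J < |Z θ ω - Z θ₀ ω|} ≤ᵐ[μ]
      (⋃ m ∈ range J, link m : Set Ω) := by
    filter_upwards [hlip] with ω hω ⟨θ, hθ, hgt⟩
    show ω ∈ ⋃ m ∈ range J, link m
    by_contra hgood
    simp only [link, Set.mem_iUnion, exists_prop, mem_range, mem_product, Set.mem_ofPred_eq,
      Prod.exists] at hgood
    push Not at hgood
    exact (abs_sub_le_of_chain hσ hK hb hω (fun m hm u hu v hv => hgood m hm u v ⟨hu, hv⟩)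
      hN0 hNT hNcover hθ).not_gt hgt
  calc _ ≤ μ (⋃ m ∈ range J, link m) := measure_mono_ae hcover
    _ ≤ ∑ m ∈ range J, ENNReal.ofReal (2 * q ^ (m + 1)) :=
        (measure_biUnion_finset_le _ _).trans (sum_le_sum fun m _ => hlink m)
    _ ≤ ENNReal.ofReal (4 * q) := by
        rw [← ENNReal.ofReal_sum_of_nonneg fun m _ => by positivity]
        exact ENNReal.ofReal_le_ofReal (sum_range_two_mul_pow_succ_le (by positivity) hq J)

end Chaining

theorem measure_exists_abs_empiricalDeviation_sub_gt_le {Ω E : Type*} [MeasurableSpace Ω]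
    [MeasurableSpace E] {α : Type*} [MetricSpace α] {μ : Measure Ω} [IsProbabilityMeasure μ] {P : Measure E}
    [IsProbabilityMeasure P] {X : ℕ → Ω → E} (hXmeas : ∀ i, Measurable (X i))
    (hXlaw : ∀ i, μ.map (X i) = P) (hXindep : iIndepFun X μ) {F : α → E → ℝ} {S : Set E}
    {T : Set α} {N : ℕ → Finset α} {θ₀ : α} {L R b : ℝ} {A : ℕ} (hL : 0 < L) (hb : 0 ≤ b) (hPS : ∀ᵐ x ∂P, x ∈ S)
    (hFmeas : ∀ u, Measurable (F u)) (hFint : ∀ u ∈ T, Integrable (F u) P)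
    (hF : ∀ u ∈ T, ∀ v ∈ T, ∀ x ∈ S, |F u x - F v x| ≤ L * dist u v)
    (hN0 : N 0 = {θ₀}) (hNT : ∀ m, ∀ u ∈ N m, u ∈ T) (hNcard : ∀ m, #(N m) ≤ A ^ m)
    (hNcover : ∀ m, ∀ θ ∈ T, ∃ u ∈ N m, dist θ u ≤ R / 2 ^ m)
    (hq : A ^ 2 * exp (-b ^ 2 / 2) ≤ 1 / 2) {n : ℕ} (hn : 0 < n) :
    μ {ω | ∃ θ ∈ T, 8 * b * (L / √n) * R + 2 * L * R / 2 ^ n <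
        |empiricalDeviation P X n (F θ) ω - empiricalDeviation P X n (F θ₀) ω|} ≤
      ENNReal.ofReal (4 * (A ^ 2 * exp (-b ^ 2 / 2))) :=
  measure_exists_abs_sub_gt_le_of_chain (by positivity) (by positivity) hb
    (fun _ hu _ hv _ hs => measure_lt_abs_empiricalDeviation_sub_le hXmeas hXlaw hXindep hL hn
      hPS hFmeas hFint hF hu hv hs)
    (ae_abs_empiricalDeviation_sub_le hXmeas hXlaw hPS hFint hF) hN0 hNT hNcard hNcover hq n

theorem sqrt_n_consistency_general
    {p k : ℕ} {M : ℝ} (hM : 0 < M)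
    (φ : EuclideanSpace ℝ (Fin p) → ℝ)
    (hφconv : ConvexOn ℝ Set.univ φ) (hφdiff : Differentiable ℝ φ)
    {H : ℝ} (hH : 0 ≤ H)
    (hgradlip : ∀ x ∈ cube p M, ∀ y ∈ cube p M,
      ‖gradient φ x - gradient φ y‖ ≤ H * ‖x - y‖)
    (Ψ : (Fin k → ℝ) → ℝ)
    {τ : ℝ} (hτ : 0 < τ)
    (hΨlip : ∀ u v : Fin k → ℝ, (∀ j, 0 ≤ u j) → (∀ j, 0 ≤ v j) →
      |Ψ u - Ψ v| ≤ τ * ∑ j, |u j - v j|)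
    {Ω : Type} [MeasureSpace Ω] [IsProbabilityMeasure (ℙ : Measure Ω)]
    (P : Measure (EuclideanSpace ℝ (Fin p))) [IsProbabilityMeasure P]
    (hP : P (cube p M) = 1)
    (X : ℕ → Ω → EuclideanSpace ℝ (Fin p))
    (hXmeas : ∀ i, Measurable (X i))
    (hXlaw : ∀ i, Measure.map (X i) ℙ = P)
    (hXindep : iIndepFun X ℙ)
    (Θstar : Fin k → EuclideanSpace ℝ (Fin p))
    (hΘstarC : ∀ j, Θstar j ∈ cube p M)
    (Θhat : ℕ → Ω → Fin k → EuclideanSpace ℝ (Fin p))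
    (hΘhat : ∀ᵐ ω ∂(ℙ : Measure Ω), ∀ n : ℕ, 0 < n →
      (∀ j, Θhat n ω j ∈ cube p M) ∧
      ∀ Θ : Fin k → EuclideanSpace ℝ (Fin p), (∀ j, Θ j ∈ cube p M) →
        (n : ℝ)⁻¹ * ∑ i ∈ Finset.range n, fTheta φ Ψ (Θhat n ω) (X i ω) ≤
          (n : ℝ)⁻¹ * ∑ i ∈ Finset.range n, fTheta φ Ψ Θ (X i ω))
    :
    ∀ δ : ℝ, 0 < δ → δ < 1 →
      ∃ C : ℝ, 0 < C ∧ ∃ N : ℕ, ∀ n : ℕ, N ≤ n →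
        ENNReal.ofReal (1 - δ) ≤
          ℙ {ω : Ω | Real.sqrt n *
            (∫ x, fTheta φ Ψ (Θhat n ω) x ∂P - ∫ x, fTheta φ Ψ Θstar x ∂P) ≤ C} := by
  intro δ hδ0 hδ1
  have hPcube : ∀ᵐ x ∂P, x ∈ cube p M :=
    (mem_ae_iff_prob_eq_one (isClosed_cube p M).measurableSet).2 hP
  obtain ⟨L, hL, hflip⟩ := exists_pos_abs_fTheta_sub_le hφconv hφdiff hτ.le hΨlip hM.le hH hgradlip
  obtain ⟨N, hN0, hNT, hNcard, hNcover⟩ := exists_nets_univ_pi_cube hM hΘstarC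
  obtain ⟨b, hb, hbδ⟩ := exists_nonneg_mul_exp_neg_sq_half_le
    (c := 4 * ((8 ^ (p * k) : ℕ) : ℝ) ^ 2) (by positivity) hδ0
  set R := 2 * √p * M
  refine ⟨8 * b * L * R + 2 * L * R + 1, by positivity, 1, fun n hn => ?_⟩
  have hbad := measure_exists_abs_empiricalDeviation_sub_gt_le hXmeas hXlaw hXindep hL hb hPcube
    (fun Θ => (continuous_fTheta hφconv hφdiff hτ.le hΨlip Θ).measurable)
    (fun Θ _ => integrable_fTheta hφconv hφdiff hτ.le hΨlip hM.le hPcube Θ) hflip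
    hN0 hNT hNcard hNcover (by linarith) hn
  refine ofReal_one_sub_le_measure hδ0.le
    ((measure_mono_ae ?_).trans (hbad.trans (ENNReal.ofReal_le_ofReal (by linarith))))
  filter_upwards [hΘhat] with ω hω hbadω
  obtain ⟨hΘhatC, hmin⟩ := hω n hn
  refine ⟨Θhat n ω, fun j _ => hΘhatC j, lt_of_not_ge fun hle => hbadω ?_⟩
  have hsqrt : √(n : ℝ) / 2 ^ n ≤ 1 := (div_le_one (by positivity)).2 (sqrt_le_two_pow n)
  calc _ ≤ √n * |empiricalDeviation P X n (fTheta φ Ψ (Θhat n ω)) ω -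
        empiricalDeviation P X n (fTheta φ Ψ Θstar) ω| := by
        gcongr
        exact integral_sub_integral_le_abs_empiricalDeviation_sub (hmin Θstar hΘstarC)
    _ ≤ √n * (8 * b * (L / √n) * R + 2 * L * R / 2 ^ n) := by gcongr
    _ = 8 * b * L * R + 2 * L * R * (√n / 2 ^ n) := by field_simp
    _ ≤ 8 * b * L * R + 2 * L * R + 1 := by
        nlinarith [mul_le_mul_of_nonneg_left hsqrt (by positivity : 0 ≤ 2 * L * R)]

/-- `√n`-consistency of the excess risk: for every `δ ∈ (0,1)` there are a
constant `C > 0` and an integer `N` such that for all `n ≥ N`, with probability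
at least `1 - δ`, `√n (P f_Θ̂ₙ - P f_Θ*) ≤ C`. -/
theorem sqrt_n_consistency
    {p k : ℕ} (hp : 0 < p) (hk : 0 < k) {M : ℝ} (hM : 0 < M)
    (φ : EuclideanSpace ℝ (Fin p) → ℝ)
    (hφconv : ConvexOn ℝ Set.univ φ) (hφdiff : Differentiable ℝ φ)
    (hφzero : φ 0 = 0) (hgradzero : gradient φ 0 = 0)
    {H : ℝ} (hH : 0 ≤ H)
    (hgradlip : ∀ x ∈ cube p M, ∀ y ∈ cube p M,
      ‖gradient φ x - gradient φ y‖ ≤ H * ‖x - y‖)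
    (Ψ : (Fin k → ℝ) → ℝ)
    (hΨnonneg : ∀ u : Fin k → ℝ, (∀ j, 0 ≤ u j) → 0 ≤ Ψ u)
    (hΨmono : ∀ u v : Fin k → ℝ, (∀ j, 0 ≤ u j) → (∀ j, u j ≤ v j) → Ψ u ≤ Ψ v)
    (hΨzero : Ψ 0 = 0)
    {τ : ℝ} (hτ : 0 < τ)
    (hΨlip : ∀ u v : Fin k → ℝ, (∀ j, 0 ≤ u j) → (∀ j, 0 ≤ v j) →
      |Ψ u - Ψ v| ≤ τ * ∑ j, |u j - v j|)
    {Ω : Type} [MeasureSpace Ω] [IsProbabilityMeasure (ℙ : Measure Ω)]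
    (P : Measure (EuclideanSpace ℝ (Fin p))) [IsProbabilityMeasure P]
    (hP : P (cube p M) = 1)
    (X : ℕ → Ω → EuclideanSpace ℝ (Fin p))
    (hXmeas : ∀ i, Measurable (X i))
    (hXlaw : ∀ i, Measure.map (X i) ℙ = P)
    (hXindep : iIndepFun X ℙ)
    (Θstar : Fin k → EuclideanSpace ℝ (Fin p))
    (hΘstarC : ∀ j, Θstar j ∈ cube p M)
    (hΘstar : ∀ Θ : Fin k → EuclideanSpace ℝ (Fin p),
      ∫ x, fTheta φ Ψ Θstar x ∂P ≤ ∫ x, fTheta φ Ψ Θ x ∂P)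
    (Θhat : ℕ → Ω → Fin k → EuclideanSpace ℝ (Fin p))
    (hΘhatmeas : ∀ n, Measurable (Θhat n))
    (hΘhat : ∀ᵐ ω ∂(ℙ : Measure Ω), ∀ n : ℕ, 0 < n →
      (∀ j, Θhat n ω j ∈ cube p M) ∧
      ∀ Θ : Fin k → EuclideanSpace ℝ (Fin p), (∀ j, Θ j ∈ cube p M) →
        (n : ℝ)⁻¹ * ∑ i ∈ Finset.range n, fTheta φ Ψ (Θhat n ω) (X i ω) ≤
          (n : ℝ)⁻¹ * ∑ i ∈ Finset.range n, fTheta φ Ψ Θ (X i ω))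
    :
    ∀ δ : ℝ, 0 < δ → δ < 1 →
      ∃ C : ℝ, 0 < C ∧ ∃ N : ℕ, ∀ n : ℕ, N ≤ n →
        ENNReal.ofReal (1 - δ) ≤
          ℙ {ω : Ω | Real.sqrt n *
            (∫ x, fTheta φ Ψ (Θhat n ω) x ∂P - ∫ x, fTheta φ Ψ Θstar x ∂P) ≤ C} :=
  sqrt_n_consistency_general hM φ hφconv hφdiff hH hgradlip Ψ hτ hΨlip P hP X hXmeas hXlaw hXindep
    Θstar hΘstarC Θhat hΘhat
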